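/- arXiv:math/0212019 — 2 statements merged into one kernel-verified Lean document; each statement's English description precedes it below -/
import Mathlib

section
/- Let a < 1 and b > 0, and let f : (0,∞) → ℝ be differentiable and strictly positive with f'(x)/f(x) = -a/x - b for all x > 0 and ∫₀^∞ f = 1. Then f(x) = b^(1-a) x^(-a) exp(-b x) / Γ(1-a), the density of the gamma distribution Γ(1-a, 1/b). -/
/-!
Dividing by `f` turns the hypothesis into the linear equation `f' = (-a/x - b) f`, whose
solutions on `(0, ∞)` are the multiples of `exp (-a log x - b x) = x ^ (-a) e^{-bx}`.
Since `∫₀^∞ x ^ (-a) e^{-bx} dx = Γ(1 - a) / b ^ (1 - a)` is finite exactly because `a < 1`,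
the normalisation `∫ f = 1` fixes the constant, and `f` is the gamma density.
-/

open MeasureTheory Real ProbabilityTheory Set

theorem IsOpen.exists_eq_mul_exp_of_hasDerivAt {s : Set ℝ} (hs : IsOpen s)
    (hs' : IsPreconnected s) {f K k : ℝ → ℝ} (hK : ∀ x ∈ s, HasDerivAt K (k x) x)
    (hf : ∀ x ∈ s, HasDerivAt f (k x * f x) x) : ∃ c, ∀ x ∈ s, f x = c * exp (K x) := by
  have hderiv : ∀ x ∈ s, HasDerivAt (fun y ↦ f y * exp (-K y)) 0 x := fun x hx ↦ by
    refine ((hf x hx).mul (hK x hx).neg.exp).congr_deriv ?_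
    simp only [Pi.neg_apply]
    ring
  obtain ⟨c, hc⟩ := hs.exists_is_const_of_deriv_eq_zero hs'
    (fun x hx ↦ (hderiv x hx).differentiableAt.differentiableWithinAt)
    (fun x hx ↦ (hderiv x hx).deriv)
  refine ⟨c, fun x hx ↦ ?_⟩
  rw [← hc x hx, mul_assoc, ← exp_add, neg_add_cancel, exp_zero, mul_one]

theorem exists_eq_mul_rpow_mul_exp_of_hasDerivAt {a b : ℝ} {f : ℝ → ℝ}
    (hf : ∀ x > 0, HasDerivAt f ((-a / x - b) * f x) x) :
    ∃ c, ∀ x > 0, f x = c * (x ^ (-a) * exp (-(b * x))) := by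
  have hK : ∀ x ∈ Ioi (0 : ℝ), HasDerivAt (fun y ↦ -a * log y - b * y) (-a / x - b) x :=
    fun x hx ↦ by
      refine (((hasDerivAt_log (ne_of_gt hx)).const_mul (-a)).sub
        ((hasDerivAt_id x).const_mul b)).congr_deriv ?_
      rw [mul_one, div_eq_mul_inv]
  obtain ⟨c, hc⟩ := isOpen_Ioi.exists_eq_mul_exp_of_hasDerivAt isPreconnected_Ioi hK hf
  refine ⟨c, fun x hx ↦ ?_⟩
  rw [hc x hx, rpow_def_of_pos hx, ← exp_add]
  ring_nf

theorem eq_gammaPDFReal_of_integral_eq_one {α r c : ℝ} (hα : 0 < α) (hr : 0 < r) {f : ℝ → ℝ}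
    (hf : ∀ x > 0, f x = c * (x ^ (α - 1) * exp (-(r * x))))
    (hint : ∫ x in Ioi 0, f x = 1) : ∀ x > 0, f x = gammaPDFReal α r x := by
  have hnorm : c * ((1 / r) ^ α * Gamma α) = 1 := by
    rw [← integral_rpow_mul_exp_neg_mul_Ioi hα hr, ← integral_const_mul]
    exact (setIntegral_congr_fun measurableSet_Ioi fun x hx ↦ (hf x hx).symm).trans hint
  have hc : c = r ^ α / Gamma α := by
    rw [one_div, inv_rpow hr.le] at hnorm
    have hrα := (rpow_pos_of_pos hr α).ne'
    have hΓ := (Gamma_pos_of_pos hα).ne'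
    field_simp at hnorm ⊢
    linarith
  intro x hx
  rw [hf x hx, gammaPDFReal, if_pos hx.le, hc, mul_assoc]

theorem reciprocal_constant_intensity_gamma (a b : ℝ) (ha : a < 1) (hb : 0 < b)
    (f f' : ℝ → ℝ)
    (hd : ∀ x > 0, HasDerivAt f (f' x) x)
    (hpos : ∀ x > 0, 0 < f x)
    (heq : ∀ x > 0, f' x / f x = -a / x - b)
    (hint : ∫ x in Set.Ioi (0 : ℝ), f x = 1) :
    ∀ x > 0, f x = b ^ (1 - a) * x ^ (-a) * Real.exp (-b * x) / Real.Gamma (1 - a) := by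
  have hode : ∀ x > 0, HasDerivAt f ((-a / x - b) * f x) x := fun x hx ↦ by
    rw [← heq x hx, div_mul_cancel₀ _ (hpos x hx).ne']
    exact hd x hx
  obtain ⟨c, hc⟩ := exists_eq_mul_rpow_mul_exp_of_hasDerivAt hode
  have hgamma := eq_gammaPDFReal_of_integral_eq_one (sub_pos.2 ha) hb
    (fun x hx ↦ by rw [sub_sub_cancel_left]; exact hc x hx) hint
  intro x hx
  rw [hgamma x hx, gammaPDFReal, if_pos hx.le, sub_sub_cancel_left, neg_mul]
  ring
end

section
/- Let S be a finite set, u : S → ℝ, λ ∈ ℝ, and define p(x) = exp(-λ u(x)) / Ω where Ω = Σ_{y ∈ S} exp(-λ u(y)). Then for any probability mass function q on S with Σ_x q(x) u(x) = Σ_x p(x) u(x), the Shannon entropy satisfies H(q) ≤ H(p), where H(r) = -Σ_x r(x) log r(x). -/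
/-!
The exponential family `p ∝ exp (-l u)` has `log p = -l u - log Z` affine in `u`, so the cross
entropy `-∑ r log p` of any mass function `r` against `p` depends only on the mean `∑ r u`.
Hence for `q` with the same mean, `-∑ q log p = -∑ p log p`, and Gibbs' inequality
`-∑ q log q ≤ -∑ q log p` finishes the proof.
-/

open Finset Real

lemma mul_log_sub_mul_log_le {p q : ℝ} (hp : 0 < p) (hq : 0 ≤ q) :
    q * log p - q * log q ≤ p - q := by
  rcases hq.eq_or_lt with rfl | hq
  · simpa using hp.le
  calc q * log p - q * log q = q * log (p / q) := by
        rw [log_div hp.ne' hq.ne']; ring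
    _ ≤ q * (p / q - 1) := mul_le_mul_of_nonneg_left (log_le_sub_one_of_pos (by positivity)) hq.le
    _ = p - q := by field_simp

lemma sum_mul_log_le_sum_mul_log {ι : Type*} (s : Finset ι) {p q : ι → ℝ}
    (hp : ∀ i ∈ s, 0 < p i) (hq : ∀ i ∈ s, 0 ≤ q i) (hpq : ∑ i ∈ s, p i ≤ ∑ i ∈ s, q i) :
    ∑ i ∈ s, q i * log (p i) ≤ ∑ i ∈ s, q i * log (q i) := by
  have := sum_le_sum fun i hi ↦ mul_log_sub_mul_log_le (hp i hi) (hq i hi)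
  rw [sum_sub_distrib, sum_sub_distrib] at this
  linarith

section Gibbs

variable {S : Type*} [Fintype S] (l : ℝ) (u : S → ℝ)

noncomputable def gibbs (x : S) : ℝ := exp (-l * u x) / ∑ y, exp (-l * u y)

lemma sum_exp_pos [Nonempty S] : 0 < ∑ y, exp (-l * u y) :=
  sum_pos (fun _ _ ↦ exp_pos _) univ_nonempty

lemma gibbs_pos [Nonempty S] (x : S) : 0 < gibbs l u x :=
  div_pos (exp_pos _) (sum_exp_pos l u)

lemma sum_gibbs [Nonempty S] : ∑ x, gibbs l u x = 1 := by
  simp only [gibbs]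
  rw [← sum_div, div_self (sum_exp_pos l u).ne']

lemma log_gibbs (x : S) : log (gibbs l u x) = -l * u x - log (∑ y, exp (-l * u y)) := by
  have : Nonempty S := ⟨x⟩
  rw [gibbs, log_div (exp_ne_zero _) (sum_exp_pos l u).ne', log_exp]

lemma sum_mul_log_gibbs (r : S → ℝ) :
    ∑ x, r x * log (gibbs l u x) =
      -l * ∑ x, r x * u x - (∑ x, r x) * log (∑ y, exp (-l * u y)) := by
  simp only [log_gibbs, mul_sub, sum_sub_distrib, mul_sum, sum_mul]
  congr 1
  exact sum_congr rfl fun x _ ↦ by ring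

end Gibbs

theorem maxent (S : Type*) [Fintype S] (u : S → ℝ) (l : ℝ) (p : S → ℝ)
    (hp : ∀ x, p x = Real.exp (-l * u x) / ∑ y, Real.exp (-l * u y))
    (q : S → ℝ) (hq0 : ∀ x, 0 ≤ q x) (hq1 : ∑ x, q x = 1)
    (hmom : ∑ x, q x * u x = ∑ x, p x * u x) :
    -∑ x, q x * Real.log (q x) ≤ -∑ x, p x * Real.log (p x) := by
  obtain rfl : p = gibbs l u := funext hp
  have : Nonempty S := by
    obtain ⟨x, -, -⟩ := exists_ne_zero_of_sum_ne_zero (hq1 ▸ one_ne_zero)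
    exact ⟨x⟩
  have hmass : ∑ x, gibbs l u x ≤ ∑ x, q x := by rw [sum_gibbs, hq1]
  calc -∑ x, q x * log (q x)
      ≤ -∑ x, q x * log (gibbs l u x) :=
        neg_le_neg <| sum_mul_log_le_sum_mul_log univ (fun x _ ↦ gibbs_pos l u x)
          (fun x _ ↦ hq0 x) hmass
    _ = -∑ x, gibbs l u x * log (gibbs l u x) := by
        rw [sum_mul_log_gibbs, sum_mul_log_gibbs, hmom, hq1, sum_gibbs]
end
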